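/- arXiv:1705.03859 — 3 statements merged into one kernel-verified Lean document; each statement's English description precedes it below -/
import Mathlib

section
/- Let l ≥ 3 be an integer, q = e^{2πi/l}, l' = l if l is odd and l/2 if l is even, c = 2 + q + q^{-1}, and [m] = (q^m - q^{-m})/(q - q^{-1}). Then ∑_{m=0}^{l'-1} (c·[m+1])^2 = -2 l' c^2 / (q - q^{-1})^2, and this quantity is nonzero. -/
/-!
Expanding the square, `(q^k - q^{-k})² = q^{2k} + q^{-2k} - 2`. Since `q²` is an `l'`-th root
of unity different from `1`, both geometric sums `∑ q^{±2(m+1)}` over a full period vanish, so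
the sum is `-2l'` times `c² / (q - q⁻¹)²`. Nonvanishing comes from `q² ≠ 1`: it gives
`q - q⁻¹ ≠ 0`, and `q ≠ -1` gives `c = (q + 1)² / q ≠ 0`.
-/

open Complex Real Finset

theorem geom_sum_eq_zero_of_pow_eq_one {K : Type*} [DivisionRing K] {x : K} {n : ℕ}
    (hx : x ≠ 1) (hxn : x ^ n = 1) : ∑ i ∈ range n, x ^ i = 0 := by
  rw [geom_sum_eq hx, hxn, sub_self, zero_div]

theorem sq_zpow_sub_zpow_neg {K : Type*} [Field K] {q : K} (hq : q ≠ 0) (m : ℕ) :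
    (q ^ ((m : ℤ) + 1) - q ^ (-((m : ℤ) + 1))) ^ 2
      = q ^ 2 * (q ^ 2) ^ m + (q ^ 2)⁻¹ * (q ^ 2)⁻¹ ^ m - 2 := by
  rw [← Nat.cast_add_one, zpow_neg, zpow_natCast]
  simp only [inv_pow]
  field_simp
  ring

theorem sum_sq_zpow_sub_zpow_neg {K : Type*} [Field K] {q : K} {n : ℕ} (hq : q ≠ 0)
    (hq2 : q ^ 2 ≠ 1) (hn : (q ^ 2) ^ n = 1) :
    ∑ m ∈ range n, (q ^ ((m : ℤ) + 1) - q ^ (-((m : ℤ) + 1))) ^ 2 = -2 * n := by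
  have hn' : (q ^ 2)⁻¹ ^ n = 1 := by rw [inv_pow, hn, inv_one]
  simp only [sq_zpow_sub_zpow_neg hq, sum_sub_distrib, sum_add_distrib, ← mul_sum,
    geom_sum_eq_zero_of_pow_eq_one hq2 hn, geom_sum_eq_zero_of_pow_eq_one (inv_ne_one.2 hq2) hn',
    mul_zero, add_zero, sum_const, card_range, nsmul_eq_mul]
  ring

theorem sub_inv_ne_zero_of_sq_ne_one {K : Type*} [Field K] {q : K} (hq : q ≠ 0)
    (hq2 : q ^ 2 ≠ 1) : q - q⁻¹ ≠ 0 := by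
  rw [sub_ne_zero]
  contrapose! hq2
  rw [sq]
  nth_rw 2 [hq2]
  exact mul_inv_cancel₀ hq

theorem two_add_add_inv_ne_zero {K : Type*} [Field K] {q : K} (hq : q ≠ 0)
    (hq2 : q ^ 2 ≠ 1) : 2 + q + q⁻¹ ≠ 0 := by
  have hfac : (2 + q + q⁻¹) * q = (q + 1) ^ 2 := by field_simp; ring
  intro h
  rw [h, zero_mul, eq_comm, sq_eq_zero_iff, add_eq_zero_iff_eq_neg] at hfac
  exact hq2 (by rw [hfac]; ring)

/-- For `q = e^{2πi/l}` with `l ≥ 3`, `l' = l` (`l` odd) or `l/2` (`l` even),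
`c = 2 + q + q⁻¹` and quantum integers `[m] = (q^m - q^{-m})/(q - q⁻¹)`, one has
`∑_{m=0}^{l'-1} (c·[m+1])² = -2l'c²/(q - q⁻¹)²`, and this quantity is nonzero. -/
theorem stmt_4 (l : ℕ) (hl : 3 ≤ l) :
    let q : ℂ := Complex.exp (2 * π * I / l)
    let l' : ℕ := if l % 2 = 1 then l else l / 2
    let c : ℂ := 2 + q + q⁻¹
    (∑ m ∈ Finset.range l',
        (c * ((q ^ ((m : ℤ) + 1) - q ^ (-((m : ℤ) + 1))) / (q - q⁻¹))) ^ 2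
      = -2 * (l' : ℂ) * c ^ 2 / (q - q⁻¹) ^ 2) ∧
    -2 * (l' : ℂ) * c ^ 2 / (q - q⁻¹) ^ 2 ≠ 0 := by
  intro q l' c
  have hprim : IsPrimitiveRoot q l := isPrimitiveRoot_exp l (by omega)
  have hq : q ≠ 0 := exp_ne_zero _
  have hq2 : q ^ 2 ≠ 1 := hprim.pow_ne_one_of_pos_of_lt two_ne_zero (by omega)
  have hl' : l' ≠ 0 := by simp only [l']; split <;> omega
  have hq2l' : (q ^ 2) ^ l' = 1 := by
    rw [← pow_mul, hprim.pow_eq_one_iff_dvd]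
    simp only [l']
    split
    · exact dvd_mul_left l 2
    · exact dvd_of_eq (by omega)
  refine ⟨?_, ?_⟩
  · simp only [mul_div_assoc, mul_pow, div_pow, ← mul_sum, ← sum_div,
      sum_sq_zpow_sub_zpow_neg hq hq2 hq2l']
    ring
  · exact div_ne_zero (mul_ne_zero (mul_ne_zero (by norm_num) (Nat.cast_ne_zero.2 hl'))
      (pow_ne_zero _ (two_add_add_inv_ne_zero hq hq2)))
      (pow_ne_zero _ (sub_inv_ne_zero_of_sq_ne_one hq hq2))
end

section
/- Let Y = (1/4)ℤ/ℤ ⊂ ℂ/ℤ and let X = {0̄, 1/2̄} ⊂ ℂ/ℤ (the classes of 0 and 1/2). Suppose ᾱ_1, ..., ᾱ_n ∈ (ℂ/ℤ) \ Y with n ≥ 2 and ᾱ_1 + ... + ᾱ_n ∉ X. Then there exist distinct indices i, j ∈ {1,...,n} with ᾱ_i + ᾱ_j ∉ X. -/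
/-!
In `ℂ/ℤ` the set `X` is the `2`-torsion and `Y` the `4`-torsion. If every pair sum were
`2`-torsion, then for `n = 2` so would be the full sum, and for `n ≥ 3` the identity
`4a₁ = 2(a₁ + a₂) + 2(a₁ + a₃) - 2(a₂ + a₃)` would make `a₁` a `4`-torsion element.
-/

open QuotientAddGroup

theorem four_nsmul_eq_zero_of_two_nsmul_add_eq_zero {G : Type*} [AddCommGroup G] {a b c : G}
    (hab : 2 • (a + b) = 0) (hac : 2 • (a + c) = 0) (hbc : 2 • (b + c) = 0) : 4 • a = 0 := by
  calc 4 • a = 2 • (a + b) + 2 • (a + c) - 2 • (b + c) := by abel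
    _ = 0 := by rw [hab, hac, hbc]; simp

theorem exists_two_nsmul_add_ne_zero {G : Type*} [AddCommGroup G] {n : ℕ} (hn : 2 ≤ n)
    (a : Fin n → G) (ha : ∀ i, 4 • a i ≠ 0) (hsum : 2 • ∑ i, a i ≠ 0) :
    ∃ i j, i ≠ j ∧ 2 • (a i + a j) ≠ 0 := by
  by_contra! hpair
  obtain rfl | hn3 := hn.eq_or_lt
  · exact hsum (by simpa [Fin.sum_univ_two] using hpair 0 1 (by decide))
  · obtain ⟨m, rfl⟩ : ∃ m, n = m + 3 := ⟨n - 3, by omega⟩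
    have h02 : (0 : Fin (m + 3)) ≠ 2 := by simp [Fin.ext_iff, Nat.mod_eq_of_lt hn3]
    have h12 : (1 : Fin (m + 3)) ≠ 2 := by simp [Fin.ext_iff, Nat.mod_eq_of_lt hn3]
    exact ha 0 <| four_nsmul_eq_zero_of_two_nsmul_add_eq_zero
      (hpair 0 1 (by simp)) (hpair 0 2 h02) (hpair 1 2 h12)

section FieldModInt

variable {K : Type*} [Field K] [CharZero K]

theorem QuotientAddGroup.nsmul_eq_zero_iff_exists_eq_intCast_div {n : ℕ} (hn : n ≠ 0)
    (x : K ⧸ AddSubgroup.zmultiples (1 : K)) :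
    n • x = 0 ↔ ∃ k : ℤ, x = ((k / n : K) : K ⧸ AddSubgroup.zmultiples (1 : K)) := by
  have hn' : (n : K) ≠ 0 := Nat.cast_ne_zero.2 hn
  constructor
  · induction x using QuotientAddGroup.induction_on with
    | H u =>
      rw [← mk_nsmul, eq_zero_iff, AddSubgroup.mem_zmultiples_iff]
      rintro ⟨k, hk⟩
      refine ⟨k, congrArg _ ?_⟩
      rw [eq_div_iff hn', mul_comm, ← nsmul_eq_mul, ← hk, zsmul_one]
  · rintro ⟨k, rfl⟩
    rw [← mk_nsmul, eq_zero_iff, AddSubgroup.mem_zmultiples_iff]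
    exact ⟨k, by rw [zsmul_one, nsmul_eq_mul, mul_div_cancel₀ _ hn']⟩

theorem QuotientAddGroup.two_nsmul_eq_zero_iff (x : K ⧸ AddSubgroup.zmultiples (1 : K)) :
    2 • x = 0 ↔ x = 0 ∨ x = ((1 / 2 : K) : K ⧸ AddSubgroup.zmultiples (1 : K)) := by
  rw [nsmul_eq_zero_iff_exists_eq_intCast_div two_ne_zero]
  constructor
  · rintro ⟨k, rfl⟩
    obtain ⟨m, rfl | rfl⟩ := Int.even_or_odd' k
    · left
      rw [eq_zero_iff]
      exact ⟨m, by push_cast; ring⟩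
    · right
      rw [eq_iff_sub_mem]
      exact ⟨m, by push_cast; ring⟩
  · rintro (rfl | rfl)
    · exact ⟨0, by simp⟩
    · exact ⟨1, by simp⟩

end FieldModInt

/-- In `ℂ/ℤ`, if `ᾱ₁,…,ᾱₙ` (`n ≥ 2`) avoid `Y = (1/4)ℤ/ℤ` and their sum avoids
`X = {0̄, (1/2)‾}`, then some pair `ᾱᵢ + ᾱⱼ` (`i ≠ j`) avoids `X`. -/
theorem stmt_6 (n : ℕ) (hn : 2 ≤ n)
    (π : ℂ →+ ℂ ⧸ AddSubgroup.zmultiples (1 : ℂ))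
    (hπ : π = QuotientAddGroup.mk' (AddSubgroup.zmultiples (1 : ℂ)))
    (a : Fin n → ℂ ⧸ AddSubgroup.zmultiples (1 : ℂ))
    (hY : ∀ i, ¬ ∃ k : ℤ, a i = π ((k : ℂ) / 4))
    (hX : ¬ (∑ i, a i = π 0 ∨ ∑ i, a i = π (1 / 2))) :
    ∃ i j, i ≠ j ∧ ¬ (a i + a j = π 0 ∨ a i + a j = π (1 / 2)) := by
  subst hπ
  simp only [map_zero, mk'_apply, ← two_nsmul_eq_zero_iff] at hX hY ⊢
  refine exists_two_nsmul_add_ne_zero hn a (fun i h4 => hY i ?_) hX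
  simpa using (nsmul_eq_zero_iff_exists_eq_intCast_div (n := 4) (by norm_num) (a i)).1 h4
end

section
/- In the quantum superalgebra U_q(sl(2|1)) at q = e^{2πi/l}, on the simple highest weight module V(n, α̃) with basis {w_{ρ,σ,p} : ρ,σ ∈ {0,1}, 0 ≤ p ≤ n} and action F_1·w_{ρ,σ,p} = q^{σ-ρ} w_{ρ,σ,p+1} - ρ(1-σ)q^{-ρ} w_{ρ-1,σ+1,p} (with w out of range = 0), the operator F_1^{l'} acts as zero, where l' = l for l odd and l/2 for l even. -/
/-!
Write `F₁ = A + B`, where `A` raises `p` and preserves `(ρ, σ)` and `B` sends `w_{1,0,p}` to a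
multiple of `w_{0,1,p}`. Then `B² = 0`, `A B = q² B A` and `A^{n+1} = 0`, so the `q²`-binomial
expansion collapses to `(A + B)^m = A^m + (1 + q² + ⋯ + q^{2(m-1)}) B A^{m-1}`. For `m = l'` both
terms vanish: `l' ≥ n + 1`, and `q²` is a primitive `l'`-th root of unity with `l' > 1`.
-/

open Complex Real Finset

section TwistedCommute

variable {R S : Type*} [CommRing R] [Ring S] [Algebra R S] {a b : S} {c : R}

theorem pow_mul_eq_smul_mul_pow (h : a * b = c • (b * a)) (k : ℕ) :
    a ^ k * b = c ^ k • (b * a ^ k) := by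
  induction k with
  | zero => simp
  | succ k ih =>
    rw [pow_succ', mul_assoc, ih, mul_smul_comm, ← mul_assoc, h, smul_mul_assoc, mul_assoc,
      smul_smul, ← pow_succ, ← pow_succ']

theorem add_pow_succ_of_mul_eq_smul_mul (h : a * b = c • (b * a)) (hb : b * b = 0) (k : ℕ) :
    (a + b) ^ (k + 1) = a ^ (k + 1) + (∑ j ∈ range (k + 1), c ^ j) • (b * a ^ k) := by
  induction k with
  | zero => simp
  | succ k ih =>
    have hbab : b * a ^ k * b = 0 := by
      rw [mul_assoc, pow_mul_eq_smul_mul_pow h, mul_smul_comm, ← mul_assoc, hb, zero_mul,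
        smul_zero]
    rw [pow_succ, ih, add_mul, mul_add, ← pow_succ, pow_mul_eq_smul_mul_pow h, smul_mul_assoc,
      mul_add, hbab, add_zero, mul_assoc, ← pow_succ, sum_range_succ _ (k + 1),
      add_smul]
    abel

theorem add_pow_eq_zero_of_mul_eq_smul_mul (h : a * b = c • (b * a)) (hb : b * b = 0) {m : ℕ}
    (hm : m ≠ 0) (ha : a ^ m = 0) (hc : ∑ j ∈ range m, c ^ j = 0) : (a + b) ^ m = 0 := by
  obtain ⟨k, rfl⟩ := Nat.exists_eq_succ_of_ne_zero hm
  rw [add_pow_succ_of_mul_eq_smul_mul h hb, ha, hc, zero_smul, add_zero]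

end TwistedCommute

theorem IsPrimitiveRoot.sq {M : Type*} [CommMonoid M] {ζ : M} {l : ℕ} (h : IsPrimitiveRoot ζ l) :
    IsPrimitiveRoot (ζ ^ 2) (if l % 2 = 1 then l else l / 2) := by
  split_ifs with hl
  · exact h.pow_of_coprime 2 (Nat.coprime_two_left.mpr (Nat.odd_iff.mpr hl))
  · exact h.pow_of_dvd two_ne_zero (Nat.dvd_of_mod_eq_zero (by omega))

section Graded

variable {ι R : Type*} [Fintype ι] [DecidableEq ι] [Semiring R]

theorem Matrix.pow_apply_eq_zero_of_raises {M : Matrix ι ι R} {d : ι → ℕ}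
    (hM : ∀ i j, d i ≠ d j + 1 → M i j = 0) (k : ℕ) {i j : ι} (hij : d i ≠ d j + k) :
    (M ^ k) i j = 0 := by
  induction k generalizing i with
  | zero => exact Matrix.one_apply_ne fun h => hij (by simp [h])
  | succ k ih =>
    rw [pow_succ', Matrix.mul_apply]
    refine sum_eq_zero fun c _ => ?_
    by_cases hc : d i = d c + 1
    · rw [ih (by omega), mul_zero]
    · rw [hM i c hc, zero_mul]

theorem Matrix.pow_eq_zero_of_raises {M : Matrix ι ι R} {d : ι → ℕ} {n : ℕ}
    (hM : ∀ i j, d i ≠ d j + 1 → M i j = 0) (hd : ∀ i, d i ≤ n) : M ^ (n + 1) = 0 := by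
  ext i j
  exact Matrix.pow_apply_eq_zero_of_raises hM _ (by have := hd i; omega)

end Graded

section F1

variable {K : Type*} [Field K] (n : ℕ) (q : K)

/-- `F₁ = raisePart + flipPart` in the basis `w_{ρ,σ,p}`, indexed by `(ρ, σ, p)`; entry `(b, b')`
is the coefficient of `w_b` in `F₁ w_{b'}`. -/
def raisePart : Matrix (Fin 2 × Fin 2 × Fin (n + 1)) (Fin 2 × Fin 2 × Fin (n + 1)) K :=
  fun b b' => if b.1 = b'.1 ∧ b.2.1 = b'.2.1 ∧ (b.2.2 : ℕ) = (b'.2.2 : ℕ) + 1 then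
      q ^ (((b'.2.1 : ℕ) : ℤ) - ((b'.1 : ℕ) : ℤ)) else 0

def flipPart : Matrix (Fin 2 × Fin 2 × Fin (n + 1)) (Fin 2 × Fin 2 × Fin (n + 1)) K :=
  fun b b' => if (b'.1 : ℕ) = 1 ∧ (b'.2.1 : ℕ) = 0 ∧ (b.1 : ℕ) = 0 ∧ (b.2.1 : ℕ) = 1 ∧
      b.2.2 = b'.2.2 then -q ^ (-1 : ℤ) else 0

theorem raisePart_pow_eq_zero : raisePart n q ^ (n + 1) = 0 :=
  Matrix.pow_eq_zero_of_raises (d := fun b => (b.2.2 : ℕ))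
    (fun _ _ h => if_neg fun hb => h hb.2.2) (fun b => Nat.lt_succ_iff.mp b.2.2.isLt)

theorem flipPart_mul_self : flipPart n q * flipPart n q = 0 := by
  ext b b'
  rw [Matrix.mul_apply]
  refine sum_eq_zero fun c _ => ?_
  obtain ⟨ρ, σ, p⟩ := c
  fin_cases ρ <;> fin_cases σ <;> simp [flipPart]

theorem raisePart_mul_flipPart {q : K} (hq : q ≠ 0) :
    raisePart n q * flipPart n q = q ^ 2 • (flipPart n q * raisePart n q) := by
  ext ⟨ρ, σ, p⟩ ⟨ρ', σ', p'⟩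
  rw [Matrix.mul_apply, Matrix.smul_apply, Matrix.mul_apply, smul_sum]
  have hq2 : q ^ 2 * (q⁻¹ * q⁻¹) = 1 := by field_simp
  -- only `w_{1,0,p'} ↦ w_{0,1,p'+1}` survives: `q · (-q⁻¹)` versus `q² · (-q⁻¹ · q⁻¹)`
  fin_cases ρ <;> fin_cases σ <;> fin_cases ρ' <;> fin_cases σ' <;>
    simp [raisePart, flipPart, Fintype.sum_prod_type, Fin.sum_univ_two, hq] <;>
    rw [sum_eq_single p (fun x _ hx => by simp [Ne.symm hx]) (by simp)] <;>
    split_ifs <;> simp_all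

end F1

/-- On the module `V(n, α̃)` of `U_q(sl(2|1))` at `q = e^{2πi/l}`, with basis
`w_{ρ,σ,p}` (`ρ,σ ∈ {0,1}`, `0 ≤ p ≤ n`) and
`F₁·w_{ρ,σ,p} = q^{σ-ρ} w_{ρ,σ,p+1} - ρ(1-σ)q^{-ρ} w_{ρ-1,σ+1,p}` (out-of-range vectors
are zero), the operator `F₁^{l'}` acts as zero, where `l' = l` (`l` odd), `l/2` (`l` even).
Here `F₁` is encoded by its matrix `M` in the basis `w`, with column convention
`F₁ w_{b'} = ∑_b M b b' · w_b`. -/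
theorem stmt_17 (l : ℕ) (hl : 3 ≤ l) (n : ℕ)
    (hn : n + 1 ≤ (if l % 2 = 1 then l else l / 2)) :
    let q : ℂ := Complex.exp (2 * π * I / l)
    let l' : ℕ := if l % 2 = 1 then l else l / 2
    let M : Matrix (Fin 2 × Fin 2 × Fin (n + 1)) (Fin 2 × Fin 2 × Fin (n + 1)) ℂ :=
      fun b b' =>
        (if b.1 = b'.1 ∧ b.2.1 = b'.2.1 ∧ (b.2.2 : ℕ) = (b'.2.2 : ℕ) + 1 then
            q ^ (((b'.2.1 : ℕ) : ℤ) - ((b'.1 : ℕ) : ℤ))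
          else 0) +
        (if (b'.1 : ℕ) = 1 ∧ (b'.2.1 : ℕ) = 0 ∧ (b.1 : ℕ) = 0 ∧ (b.2.1 : ℕ) = 1 ∧
            b.2.2 = b'.2.2 then
            -q ^ (-1 : ℤ)
          else 0)
    M ^ l' = 0 := by
  intro q l' M
  have hq : IsPrimitiveRoot (q ^ 2) l' := (Complex.isPrimitiveRoot_exp l (by omega)).sq
  have hl' : 1 < l' := by simp only [l']; split_ifs <;> omega
  change (raisePart n q + flipPart n q) ^ l' = 0
  exact add_pow_eq_zero_of_mul_eq_smul_mul (raisePart_mul_flipPart n (Complex.exp_ne_zero _))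
    (flipPart_mul_self n q) (by omega) (pow_eq_zero_of_le hn (raisePart_pow_eq_zero n q))
    (hq.geom_sum_eq_zero hl')
end
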